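/- Let R be a reduced commutative ring with identity which is not an integral domain. Then the annihilator-ideal graph A_I(R) equals the annihilating-ideal graph 𝔸𝔾(R) if and only if R has exactly two minimal prime ideals. -/

import Mathlib

/-- The vertex set of the annihilator-ideal/annihilating-ideal graphs:
nonzero ideals with nonzero annihilator. -/
abbrev AnnVert (R : Type*) [CommRing R] : Type _ :=
  {I : Ideal R // I ≠ ⊥ ∧ Submodule.annihilator I ≠ ⊥}

/-- The annihilator-ideal graph `A_I(R)`. -/
def annihilatorIdealGraph (R : Type*) [CommRing R] : SimpleGraph (AnnVert R) where
  Adj I J := I ≠ J ∧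
    ((Submodule.annihilator (I.1 * J.1) : Ideal R) : Set R) ≠
      ↑(Submodule.annihilator I.1) ∪ ↑(Submodule.annihilator J.1)
  symm := by
    refine ⟨?_⟩
    rintro I J ⟨hne, h⟩
    exact ⟨hne.symm, by rwa [mul_comm, Set.union_comm]⟩
  loopless := by refine ⟨?_⟩; rintro I ⟨h, -⟩; exact h rfl

/-- The annihilating-ideal graph `𝔸𝔾(R)`. -/
def annihilatingIdealGraph (R : Type*) [CommRing R] : SimpleGraph (AnnVert R) where
  Adj I J := I ≠ J ∧ I.1 * J.1 = ⊥
  symm := by refine ⟨?_⟩; rintro I J ⟨hne, h⟩; exact ⟨hne.symm, by rwa [mul_comm]⟩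
  loopless := by refine ⟨?_⟩; rintro I ⟨h, -⟩; exact h rfl

/-- `G` is a complete bipartite graph with parts `s` and `t`. -/
def SimpleGraph.IsCompleteBipartiteWith {V : Type*} (G : SimpleGraph V) (s t : Set V) : Prop :=
  Disjoint s t ∧ s ∪ t = Set.univ ∧
    ∀ u v, G.Adj u v ↔ (u ∈ s ∧ v ∈ t) ∨ (u ∈ t ∧ v ∈ s)

/-- `G` is a star graph: complete bipartite with one part a single vertex and the
other part nonempty. -/
def SimpleGraph.IsStarGraph {V : Type*} (G : SimpleGraph V) : Prop :=
  ∃ (c : V) (t : Set V), t.Nonempty ∧ G.IsCompleteBipartiteWith {c} t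

/-!
Both directions rest on the fact that a reduced ring is the intersection of its minimal primes.

If `P ⊓ Q = 0` for primes `P`, `Q`, every vertex `K` lies in exactly one of them and then
`Ann K` is the other one; so for vertices `I`, `J` with `IJ ≠ 0` the ideals `I`, `IJ` lie in
the same prime and `Ann (IJ) = Ann I`.

Conversely, given three minimal primes `P₁, P₂, P₃`, prime avoidance gives `b ∈ P₂ \ (P₁ ∪ P₃)`
and `c ∈ P₃ \ (P₁ ∪ P₂)`, and reducedness gives `t ∉ P₂`, `s ∉ P₃` with `tb = sc = 0`. Then
`bc ∉ P₁` is nonzero, while `s` and `t` both kill `bc` but `s` does not kill `b` and `t` does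
not kill `c`, so `(b)` and `(c)` are adjacent in `A_I(R)` but not in `𝔸𝔾(R)`.
-/

section

variable {R : Type*} [CommRing R]

namespace Ideal

open Submodule

theorem annihilator_le_of_not_le {K P : Ideal R} [P.IsPrime] (h : ¬K ≤ P) :
    annihilator K ≤ P := by
  obtain ⟨k, hk, hkP⟩ := SetLike.not_le_iff_exists.mp h
  refine fun x hx => (‹P.IsPrime›.mem_or_mem ?_).resolve_right hkP
  rw [show x * k = 0 from mem_annihilator.mp hx k hk]
  exact P.zero_mem

theorem annihilator_eq_of_inf_eq_bot {P Q K : Ideal R} [Q.IsPrime] (hPQ : P ⊓ Q = ⊥)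
    (hKP : K ≤ P) (hKQ : ¬K ≤ Q) : annihilator K = Q := by
  refine le_antisymm (annihilator_le_of_not_le hKQ) fun q hq => mem_annihilator.mpr fun y hy => ?_
  have : q * y ∈ P ⊓ Q := ⟨P.mul_mem_left q (hKP hy), Q.mul_mem_right y hq⟩
  rwa [hPQ, mem_bot] at this

theorem annihilator_mul_eq_left_of_inf_eq_bot {P Q I J : Ideal R} [P.IsPrime] [Q.IsPrime]
    (hPQ : P ⊓ Q = ⊥) (hI : annihilator I ≠ ⊥) (h : ¬I * J ≤ Q) :
    annihilator (I * J) = annihilator I := by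
  have hIQ : ¬I ≤ Q := fun hIQ => h (mul_le_left.trans hIQ)
  have hIP : I ≤ P := by
    by_contra hIP
    refine hI (eq_bot_iff.mpr ?_)
    rw [← hPQ]
    exact le_inf (annihilator_le_of_not_le hIP) (annihilator_le_of_not_le hIQ)
  rw [annihilator_eq_of_inf_eq_bot hPQ (mul_le_left.trans hIP) h,
    annihilator_eq_of_inf_eq_bot hPQ hIP hIQ]

theorem coe_annihilator_mul_eq_union_iff {I J : Ideal R} :
    ((annihilator (I * J) : Ideal R) : Set R) = ↑(annihilator I) ∪ ↑(annihilator J) ↔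
      annihilator (I * J) = annihilator I ∨ annihilator (I * J) = annihilator J := by
  have hI : annihilator I ≤ annihilator (I * J) := annihilator_mono mul_le_left
  have hJ : annihilator J ≤ annihilator (I * J) := annihilator_mono mul_le_right
  constructor
  · intro h
    rcases subset_union.mp h.le with h | h
    exacts [.inl (le_antisymm h hI), .inr (le_antisymm h hJ)]
  · rintro (h | h) <;> rw [h]
    exacts [(Set.union_eq_left.mpr (h ▸ hJ)).symm, (Set.union_eq_right.mpr (h ▸ hI)).symm]

theorem eq_of_mem_minimalPrimes_of_le {P Q : Ideal R} (hP : P ∈ minimalPrimes R)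
    (hQ : Q ∈ minimalPrimes R) (h : P ≤ Q) : P = Q :=
  le_antisymm h (hQ.2 ⟨hP.isPrime, bot_le⟩ h)

theorem exists_mem_notMem_notMem_of_mem_minimalPrimes {P Q Q' : Ideal R}
    (hP : P ∈ minimalPrimes R) (hQ : Q ∈ minimalPrimes R) (hQ' : Q' ∈ minimalPrimes R)
    (hPQ : P ≠ Q) (hPQ' : P ≠ Q') : ∃ x ∈ P, x ∉ Q ∧ x ∉ Q' := by
  have : ¬(P : Set R) ⊆ Q ∪ Q' := by
    rw [subset_union]
    rintro (h | h)
    exacts [hPQ (eq_of_mem_minimalPrimes_of_le hP hQ h),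
      hPQ' (eq_of_mem_minimalPrimes_of_le hP hQ' h)]
  simpa [Set.subset_def, not_or] using this

section IsReduced

variable [IsReduced R]

theorem sInf_minimalPrimes_eq_bot : sInf (minimalPrimes R) = ⊥ := by
  rw [minimalPrimes, sInf_minimalPrimes, radical_bot_of_isReduced]

theorem exists_notMem_mul_eq_zero_of_mem_minimalPrimes {P : Ideal R}
    (hP : P ∈ minimalPrimes R) {x : R} (hx : x ∈ P) : ∃ s ∉ P, s * x = 0 := by
  have := hP.isPrime
  -- `P R_P` is the only minimal prime of `R_P`, hence its nilradical.
  have hrad : algebraMap R (Localization.AtPrime P) x ∈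
      ((⊥ : Ideal R).map (algebraMap R _)).radical := by
    rw [IsLocalization.AtPrime.radical_map_of_mem_minimalPrimes _ P ⊥ hP]
    exact mem_map_of_mem _ hx
  obtain ⟨n, hn⟩ := hrad
  rw [map_bot, mem_bot, ← map_pow, IsLocalization.map_eq_zero_iff P.primeCompl] at hn
  obtain ⟨⟨s, hs⟩, hsx⟩ := hn
  refine ⟨s, hs, IsReduced.eq_zero _ ⟨n + 1, ?_⟩⟩
  calc (s * x) ^ (n + 1) = s ^ n * x * (s * x ^ n) := by ring
    _ = 0 := by rw [hsx, mul_zero]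

theorem minimalPrimes_nontrivial [Nontrivial R] (h : ¬IsDomain R) :
    (minimalPrimes R).Nontrivial := by
  by_contra hs
  obtain ⟨P, hP⟩ := nonempty_minimalPrimes (R := R) bot_ne_top
  have hmin : minimalPrimes R = {P} := (Set.not_nontrivial_iff.mp hs).eq_singleton_of_mem hP
  have hP0 : P = ⊥ := by rw [← sInf_singleton (a := P), ← hmin, sInf_minimalPrimes_eq_bot]
  have : (⊥ : Ideal R).IsPrime := hP0 ▸ hP.isPrime
  exact h (IsDomain.of_bot_isPrime R)

end IsReduced

end Ideal

open Ideal Submodule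

theorem annihilatorIdealGraph_adj_iff {I J : AnnVert R} :
    (annihilatorIdealGraph R).Adj I J ↔
      I ≠ J ∧ annihilator (I.1 * J.1) ≠ annihilator I.1 ∧
        annihilator (I.1 * J.1) ≠ annihilator J.1 := by
  simp only [annihilatorIdealGraph, ne_eq, coe_annihilator_mul_eq_union_iff, not_or]

theorem annihilatingIdealGraph_le_annihilatorIdealGraph :
    annihilatingIdealGraph R ≤ annihilatorIdealGraph R := by
  rintro I J ⟨hIJ, hmul⟩
  refine annihilatorIdealGraph_adj_iff.mpr ⟨hIJ, ?_, ?_⟩ <;>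
    rw [hmul, annihilator_bot, ne_comm, ne_eq, annihilator_eq_top_iff]
  exacts [I.2.1, J.2.1]

theorem annihilatorIdealGraph_eq_annihilatingIdealGraph_iff :
    annihilatorIdealGraph R = annihilatingIdealGraph R ↔
      ∀ I J : AnnVert R, (annihilatorIdealGraph R).Adj I J → I.1 * J.1 = ⊥ := by
  refine ⟨fun h I J hIJ => (h ▸ hIJ).2, fun h => ?_⟩
  exact le_antisymm (fun I J hIJ => ⟨hIJ.ne, h I J hIJ⟩)
    annihilatingIdealGraph_le_annihilatorIdealGraph

theorem annihilatorIdealGraph_eq_of_inf_eq_bot {P Q : Ideal R} [P.IsPrime] [Q.IsPrime]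
    (hPQ : P ⊓ Q = ⊥) : annihilatorIdealGraph R = annihilatingIdealGraph R := by
  refine annihilatorIdealGraph_eq_annihilatingIdealGraph_iff.mpr fun I J hIJ => ?_
  by_contra hne
  have : ¬I.1 * J.1 ≤ P ∨ ¬I.1 * J.1 ≤ Q := by
    rw [← not_and_or, ← le_inf_iff, hPQ, le_bot_iff]
    exact hne
  rw [annihilatorIdealGraph_adj_iff] at hIJ
  rcases this with h | h
  · exact hIJ.2.1 (annihilator_mul_eq_left_of_inf_eq_bot (inf_comm P Q ▸ hPQ) I.2.2 h)
  · exact hIJ.2.1 (annihilator_mul_eq_left_of_inf_eq_bot hPQ I.2.2 h)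

theorem exists_annihilatorIdealGraph_adj_mul_ne_bot {b c s t : R} (htb : t * b = 0)
    (hsc : s * c = 0) (hbc : b * c ≠ 0) (hsb : s * b ≠ 0) (htc : t * c ≠ 0) :
    ∃ I J : AnnVert R, (annihilatorIdealGraph R).Adj I J ∧ I.1 * J.1 ≠ ⊥ := by
  have mem_ann {x y : R} : x ∈ annihilator (span {y}) ↔ x * y = 0 :=
    mem_annihilator_span_singleton y x
  let I : AnnVert R := ⟨span {b}, by simpa using left_ne_zero_of_mul hbc,
    (Submodule.ne_bot_iff _).mpr ⟨t, mem_ann.mpr htb, left_ne_zero_of_mul htc⟩⟩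
  let J : AnnVert R := ⟨span {c}, by simpa using right_ne_zero_of_mul hbc,
    (Submodule.ne_bot_iff _).mpr ⟨s, mem_ann.mpr hsc, left_ne_zero_of_mul hsb⟩⟩
  have hIJ : I.1 * J.1 = span {b * c} := span_singleton_mul_span_singleton b c
  have hs : s ∈ annihilator (I.1 * J.1) := by
    rw [hIJ, mem_ann, mul_left_comm, hsc, mul_zero]
  have ht : t ∈ annihilator (I.1 * J.1) := by
    rw [hIJ, mem_ann, ← mul_assoc, htb, zero_mul]
  refine ⟨I, J, annihilatorIdealGraph_adj_iff.mpr ⟨?_, ?_, ?_⟩, by simpa [hIJ] using hbc⟩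
  · intro h
    have hspan : span {b} = span {c} := congrArg Subtype.val h
    exact htc (mem_ann.mp (hspan ▸ mem_ann.mpr htb))
  · exact fun h => hsb (mem_ann.mp (h ▸ hs))
  · exact fun h => htc (mem_ann.mp (h ▸ ht))

theorem exists_annihilatorIdealGraph_adj_mul_ne_bot_of_mem_minimalPrimes [IsReduced R]
    {P₁ P₂ P₃ : Ideal R} (h₁ : P₁ ∈ minimalPrimes R) (h₂ : P₂ ∈ minimalPrimes R)
    (h₃ : P₃ ∈ minimalPrimes R) (h₁₂ : P₁ ≠ P₂) (h₁₃ : P₁ ≠ P₃) (h₂₃ : P₂ ≠ P₃) :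
    ∃ I J : AnnVert R, (annihilatorIdealGraph R).Adj I J ∧ I.1 * J.1 ≠ ⊥ := by
  have mul_ne_zero_of_notMem {P : Ideal R} (hP : P ∈ minimalPrimes R) {x y : R} (hx : x ∉ P)
      (hy : y ∉ P) : x * y ≠ 0 := fun h => hP.isPrime.mul_notMem hx hy (h ▸ P.zero_mem)
  obtain ⟨b, hb₂, hb₁, hb₃⟩ :=
    exists_mem_notMem_notMem_of_mem_minimalPrimes h₂ h₁ h₃ h₁₂.symm h₂₃
  obtain ⟨c, hc₃, hc₁, hc₂⟩ :=
    exists_mem_notMem_notMem_of_mem_minimalPrimes h₃ h₁ h₂ h₁₃.symm h₂₃.symm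
  obtain ⟨t, ht₂, htb⟩ := exists_notMem_mul_eq_zero_of_mem_minimalPrimes h₂ hb₂
  obtain ⟨s, hs₃, hsc⟩ := exists_notMem_mul_eq_zero_of_mem_minimalPrimes h₃ hc₃
  exact exists_annihilatorIdealGraph_adj_mul_ne_bot htb hsc (mul_ne_zero_of_notMem h₁ hb₁ hc₁)
    (mul_ne_zero_of_notMem h₃ hs₃ hb₃) (mul_ne_zero_of_notMem h₂ ht₂ hc₂)

end

theorem stmt8 (R : Type*) [CommRing R] [Nontrivial R] [IsReduced R] (hdom : ¬IsDomain R) :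
    annihilatorIdealGraph R = annihilatingIdealGraph R ↔
      ∃ P Q : Ideal R, P ≠ Q ∧ minimalPrimes R = {P, Q} := by
  constructor
  · intro h
    obtain ⟨P, hP, Q, hQ, hPQ⟩ := Ideal.minimalPrimes_nontrivial hdom
    refine ⟨P, Q, hPQ, Set.Subset.antisymm (fun P' hP' => ?_)
      (Set.insert_subset hP (Set.singleton_subset_iff.mpr hQ))⟩
    by_contra hnot
    obtain ⟨hP'P, hP'Q⟩ : P' ≠ P ∧ P' ≠ Q := by simpa [not_or] using hnot
    obtain ⟨I, J, hadj, hne⟩ := exists_annihilatorIdealGraph_adj_mul_ne_bot_of_mem_minimalPrimes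
      hP hQ hP' hPQ hP'P.symm hP'Q.symm
    exact hne (annihilatorIdealGraph_eq_annihilatingIdealGraph_iff.mp h I J hadj)
  · rintro ⟨P, Q, -, hmin⟩
    have : P.IsPrime := (hmin ▸ Set.mem_insert P {Q} : P ∈ minimalPrimes R).isPrime
    have : Q.IsPrime := (hmin ▸ Set.mem_insert_of_mem P rfl : Q ∈ minimalPrimes R).isPrime
    refine annihilatorIdealGraph_eq_of_inf_eq_bot (P := P) (Q := Q) ?_
    rw [← sInf_pair, ← hmin, Ideal.sInf_minimalPrimes_eq_bot]
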